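/- arXiv:2208.08656 — 9 statements merged into one kernel-verified Lean document; each statement's English description precedes it below -/
import Mathlib

section
/- Let A be a PCA with elementary sub-PCA A' and fixed pairing combinators, and let X be a set. Define (φ \ ψ)(x) := {c ∈ A : for every b ∈ ψ(x), c·b is defined and c·b ∈ φ(x)} and (ψ ∨ ρ)(x) := {⟨b,c⟩ : b ∈ ψ(x) and c ∈ ρ(x)}. Then for all φ, ψ, ρ : X → 𝒫(A): (φ \ ψ) ≤_M ρ if and only if φ ≤_M ψ ∨ ρ. (This is the co-Heyting subtraction adjunction making the Medvedev structure a co-Heyting algebra.) -/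
universe u v

/-- A partial combinatory algebra together with an elementary sub-PCA (`sub`)
and fixed pairing combinators. Partiality is modeled via `Option`:
`app a b = some c` means "a·b is defined and equals c". -/
structure SubPCA (α : Type u) where
  app : α → α → Option α
  sub : Set α
  kComb : α
  sComb : α
  k_mem : kComb ∈ sub
  s_mem : sComb ∈ sub
  sub_closed : ∀ a b c : α, a ∈ sub → b ∈ sub → app a b = some c → c ∈ sub
  k_spec : ∀ a b : α, ∃ ka, app kComb a = some ka ∧ app ka b = some a
  s_spec₁ : ∀ a b : α, ∃ sa sab, app sComb a = some sa ∧ app sa b = some sab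
  s_spec₂ : ∀ a b c sa sab : α, app sComb a = some sa → app sa b = some sab →
    app sab c = (app a c).bind fun ac => (app b c).bind fun bc => app ac bc
  pair : α → α → α
  pair_inj : ∀ a b a' b' : α, pair a b = pair a' b' → a = a' ∧ b = b'
  pairComb : α
  pair_mem : pairComb ∈ sub
  pair_spec : ∀ a b : α, ∃ pa, app pairComb a = some pa ∧ app pa b = some (pair a b)
  fstComb : α
  sndComb : α
  fst_mem : fstComb ∈ sub
  snd_mem : sndComb ∈ sub
  fst_spec : ∀ a b : α, app fstComb (pair a b) = some a
  snd_spec : ∀ a b : α, app sndComb (pair a b) = some b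

/-- The Medvedev preorder on maps `X → 𝒫(A)`: `φ ≤_M ψ` iff there is `e ∈ A'`
such that for every `x` and every `b ∈ ψ x`, `e·b` is defined and `e·b ∈ φ x`. -/
def MedLE {α : Type u} (P : SubPCA α) {X : Type v} (φ ψ : X → Set α) : Prop :=
  ∃ e ∈ P.sub, ∀ x : X, ∀ b ∈ ψ x, ∃ c, P.app e b = some c ∧ c ∈ φ x

/-- The Muchnik preorder on maps `X → 𝒫(A)`: `φ ≤_w ψ` iff for every `x` and
every `b ∈ ψ x` there is `e ∈ A'` with `e·b` defined and in `φ x`. -/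
def MucLE {α : Type u} (P : SubPCA α) {X : Type v} (φ ψ : X → Set α) : Prop :=
  ∀ x : X, ∀ b ∈ ψ x, ∃ e ∈ P.sub, ∃ c, P.app e b = some c ∧ c ∈ φ x

/-- The Medvedev join: `(ψ ∨ ρ)(x) = {⟨b,c⟩ : b ∈ ψ x, c ∈ ρ x}`. -/
def medJoin {α : Type u} (P : SubPCA α) {X : Type v} (ψ ρ : X → Set α) : X → Set α :=
  fun x => {w | ∃ b ∈ ψ x, ∃ c ∈ ρ x, w = P.pair b c}

/-- Co-Heyting subtraction:
`(φ \ ψ)(x) = {c : ∀ b ∈ ψ x, c·b is defined and c·b ∈ φ x}`. -/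
def medSub {α : Type u} (P : SubPCA α) {X : Type v} (φ ψ : X → Set α) : X → Set α :=
  fun x => {c | ∀ b ∈ ψ x, ∃ cb, P.app c b = some cb ∧ cb ∈ φ x}

namespace SubPCA
variable {α : Type u} (P : SubPCA α)

noncomputable def Ka (a : α) : α := (P.k_spec a a).choose

lemma app_k (a : α) : P.app P.kComb a = some (P.Ka a) := (P.k_spec a a).choose_spec.1

lemma app_Ka (a b : α) : P.app (P.Ka a) b = some a := by
  obtain ⟨ka, h1, h2⟩ := P.k_spec a b
  have h := P.app_k a
  rw [h1] at h
  rwa [Option.some.inj h] at h2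

lemma Ka_mem {a : α} (ha : a ∈ P.sub) : P.Ka a ∈ P.sub :=
  P.sub_closed _ _ _ P.k_mem ha (P.app_k a)

noncomputable def Sa (a : α) : α := (P.s_spec₁ a a).choose

lemma app_s (a : α) : P.app P.sComb a = some (P.Sa a) :=
  (P.s_spec₁ a a).choose_spec.choose_spec.1

noncomputable def Sab (a b : α) : α := (P.s_spec₁ a b).choose_spec.choose

lemma app_Sa (a b : α) : P.app (P.Sa a) b = some (P.Sab a b) := by
  have h := (P.s_spec₁ a b).choose_spec.choose_spec
  have h' := P.app_s a
  rw [h.1] at h'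
  rw [← Option.some.inj h']
  exact h.2

lemma Sa_mem {a : α} (ha : a ∈ P.sub) : P.Sa a ∈ P.sub :=
  P.sub_closed _ _ _ P.s_mem ha (P.app_s a)

lemma Sab_mem {a b : α} (ha : a ∈ P.sub) (hb : b ∈ P.sub) : P.Sab a b ∈ P.sub :=
  P.sub_closed _ _ _ (P.Sa_mem ha) hb (P.app_Sa a b)

lemma app_Sab (a b c : α) :
    P.app (P.Sab a b) c = (P.app a c).bind fun ac => (P.app b c).bind fun bc => P.app ac bc :=
  P.s_spec₂ a b c _ _ (P.app_s a) (P.app_Sa a b)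

end SubPCA

/-- The co-Heyting subtraction adjunction: `(φ \ ψ) ≤_M ρ ↔ φ ≤_M ψ ∨ ρ`. -/
theorem medSub_adjunction {α : Type u} (P : SubPCA α) (X : Type v) (φ ψ ρ : X → Set α) :
    MedLE P (medSub P φ ψ) ρ ↔ MedLE P φ (medJoin P ψ ρ) := by

  constructor
  · rintro ⟨e, he, hspec⟩
    refine ⟨P.Sab (P.Sab (P.Ka e) P.sndComb) P.fstComb,
      P.Sab_mem (P.Sab_mem (P.Ka_mem he) P.snd_mem) P.fst_mem, ?_⟩
    rintro x w ⟨b, hb, c, hc, rfl⟩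
    obtain ⟨d, hd1, hd2⟩ := hspec x c hc
    obtain ⟨db, hdb1, hdb2⟩ := hd2 b hb
    refine ⟨db, ?_, hdb2⟩
    rw [P.app_Sab, P.app_Sab, P.app_Ka, P.snd_spec, P.fst_spec]
    simp [hd1, hdb1]
  · rintro ⟨e, he, hspec⟩
    refine ⟨P.Sab (P.Ka (P.Sa (P.Ka e))) (P.Sab (P.Ka (P.Sa P.pairComb)) P.kComb),
      P.Sab_mem (P.Ka_mem (P.Sa_mem (P.Ka_mem he)))
        (P.Sab_mem (P.Ka_mem (P.Sa_mem P.pair_mem)) P.k_mem), ?_⟩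
    intro x c hc
    refine ⟨P.Sab (P.Ka e) (P.Sab P.pairComb (P.Ka c)), ?_, ?_⟩
    · rw [P.app_Sab, P.app_Ka, P.app_Sab, P.app_Ka, P.app_k]
      simp [P.app_Sa]
    · intro b hb
      obtain ⟨r, hr1, hr2⟩ := hspec x (P.pair b c) ⟨b, hb, c, hc, rfl⟩
      refine ⟨r, ?_, hr2⟩
      obtain ⟨pa, hpa1, hpa2⟩ := P.pair_spec b c
      rw [P.app_Sab, P.app_Ka, P.app_Sab, P.app_Ka]
      simp [hpa1, hpa2, hr1]
end

section
/- (Medvedev isomorphism.) Let A be a PCA with elementary sub-PCA A' and fixed pairing combinators, and let X be a set. For pairs (f, α) with f : Y → X a function from some set Y and α : Y → A, define (f,α) ≤_∀ (g,β) (where g : Z → X and β : Z → A) iff there exist a function h : Z → Y with f ∘ h = g and an element ā ∈ A' such that for every z ∈ Z, ā·β(z) is defined and equals α(h(z)). Define φ_{(f,α)} : X → 𝒫(A) by φ_{(f,α)}(x) := {α(y) : y ∈ Y, f(y) = x}. Then: (1) (f,α) ≤_∀ (g,β) if and only if φ_{(f,α)} ≤_M φ_{(g,β)}; and (2) for every φ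 : X → 𝒫(A) there exist a set Y, f : Y → X and α : Y → A with φ = φ_{(f,α)}. -/
universe u v

/-- `φ_{(f,α)}(x) = {α(y) : y ∈ Y, f(y) = x}`. -/
def medOf {α X Y : Type u} (f : Y → X) (a : Y → α) : X → Set α :=
  fun x => {w | ∃ y, f y = x ∧ a y = w}

/-- The order of the full universal completion of the Turing doctrine:
`(f,α) ≤_∀ (g,β)` iff there are `h : Z → Y` with `f ∘ h = g` and `e ∈ A'`
such that `e·β(z)` is defined and equals `α(h z)` for every `z`. -/
def forallCompLE {α X Y Z : Type u} (P : SubPCA α)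
    (f : Y → X) (a : Y → α) (g : Z → X) (b : Z → α) : Prop :=
  ∃ h : Z → Y, f ∘ h = g ∧ ∃ e ∈ P.sub, ∀ z : Z, P.app e (b z) = some (a (h z))

/-- Medvedev isomorphism: the map `(f,α) ↦ φ_{(f,α)}` from the full universal
completion of the Turing doctrine to the Medvedev doctrine preserves and
reflects the order, and is surjective. -/
theorem medvedev_isomorphism {α X : Type u} (P : SubPCA α) :
    (∀ (Y Z : Type u) (f : Y → X) (a : Y → α) (g : Z → X) (b : Z → α),
      forallCompLE P f a g b ↔ MedLE P (medOf f a) (medOf g b)) ∧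
    (∀ φ : X → Set α, ∃ (Y : Type u) (f : Y → X) (a : Y → α), φ = medOf f a) := by
  constructor
  · intro Y Z f a g b
    constructor
    · rintro ⟨h, hfh, e, he, hz⟩
      refine ⟨e, he, ?_⟩
      rintro x w ⟨z, hz1, rfl⟩
      exact ⟨a (h z), hz z, h z, by rw [← hz1, ← congrFun hfh z]; rfl, rfl⟩
    · rintro ⟨e, he, hM⟩
      have key : ∀ z : Z, ∃ y : Y, f y = g z ∧ P.app e (b z) = some (a y) := by
        intro z
        obtain ⟨c, hc, y, hy1, hy2⟩ := hM (g z) (b z) ⟨z, rfl, rfl⟩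
        exact ⟨y, hy1, hy2 ▸ hc⟩
      choose h h1 h2 using key
      exact ⟨h, funext h1, e, he, h2⟩
  · intro φ
    refine ⟨Σ x : X, φ x, fun p => p.1, fun p => p.2.1, ?_⟩
    funext x
    ext w
    constructor
    · intro hw
      exact ⟨⟨x, w, hw⟩, rfl, rfl⟩
    · rintro ⟨⟨x', w', hw'⟩, rfl, rfl⟩
      exact hw'
end

section
/- Let A be a PCA with elementary sub-PCA A' and fixed pairing combinators, let X be a set, and fix distinct p₁, p₂ ∈ A' with a case combinator d ∈ A'. Define (φ ∧ ρ)(x) := {⟨p₁,a⟩ : a ∈ φ(x)} ∪ {⟨p₂,c⟩ : c ∈ ρ(x)} and (φ → ψ)(x) := {b ∈ ψ(x) : for every ā ∈ A', it is not the case that ā·b is defined and ā·b ∈ φ(x)}. Then for all φ, ψ, ρ : X → 𝒫(A): ρ ≤_w (φ → ψ) if and only if (φ ∧ ρ) ≤_w ψ. (This is the Heyting implication adjunction for the Muchnik structure.) -/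
universe u v

/-- The meet: `(φ ∧ ρ)(x) = {⟨p₁,a⟩ : a ∈ φ x} ∪ {⟨p₂,c⟩ : c ∈ ρ x}`. -/
def mucMeet {α : Type u} (P : SubPCA α) {X : Type v} (p₁ p₂ : α) (φ ρ : X → Set α) :
    X → Set α :=
  fun x => {w | ∃ a ∈ φ x, w = P.pair p₁ a} ∪ {w | ∃ c ∈ ρ x, w = P.pair p₂ c}

/-- Heyting implication for the Muchnik structure:
`(φ → ψ)(x) = {b ∈ ψ x : no e ∈ A' sends b into φ x}`. -/
def mucImp {α : Type u} (P : SubPCA α) {X : Type v} (φ ψ : X → Set α) : X → Set α :=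
  fun x => {b | b ∈ ψ x ∧ ∀ e ∈ P.sub, ¬ ∃ c, P.app e b = some c ∧ c ∈ φ x}

/-- The Heyting implication adjunction for the Muchnik preorder:
`ρ ≤_w (φ → ψ) ↔ (φ ∧ ρ) ≤_w ψ`. -/
theorem mucImp_adjunction {α : Type u} (P : SubPCA α) (X : Type v)
    (p₁ p₂ : α) (hp₁ : p₁ ∈ P.sub) (hp₂ : p₂ ∈ P.sub) (hne : p₁ ≠ p₂)
    (d : α) (hd : d ∈ P.sub)
    (hd₁ : ∀ u w : α, ∃ r₁ r₂, P.app d p₁ = some r₁ ∧ P.app r₁ u = some r₂ ∧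
      P.app r₂ w = some u)
    (hd₂ : ∀ u w : α, ∃ r₁ r₂, P.app d p₂ = some r₁ ∧ P.app r₁ u = some r₂ ∧
      P.app r₂ w = some w)
    (φ ψ ρ : X → Set α) :
    MucLE P ρ (mucImp P φ ψ) ↔ MucLE P (mucMeet P p₁ p₂ φ ρ) ψ := by
  -- composition lemma: for g, e ∈ A' there is f ∈ A' with f·b ≃ g·(e·b)
  have comp : ∀ g e : α, g ∈ P.sub → e ∈ P.sub →
      ∃ f ∈ P.sub, ∀ b : α, P.app f b = (P.app e b).bind (P.app g) := by
    intro g e hg he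
    obtain ⟨kg, hk1, _⟩ := P.k_spec g g
    have hkg : kg ∈ P.sub := P.sub_closed _ _ _ P.k_mem hg hk1
    obtain ⟨sa, sab, hs1, hs2⟩ := P.s_spec₁ kg e
    have hsa : sa ∈ P.sub := P.sub_closed _ _ _ P.s_mem hkg hs1
    have hsab : sab ∈ P.sub := P.sub_closed _ _ _ hsa he hs2
    refine ⟨sab, hsab, fun b => ?_⟩
    rw [P.s_spec₂ kg e b sa sab hs1 hs2]
    obtain ⟨kg', hk1', hk2'⟩ := P.k_spec g b
    have hkk : kg' = kg := Option.some_inj.mp (hk1'.symm.trans hk1)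
    subst hkk
    rw [hk2']
    cases P.app e b <;> rfl
  constructor
  · intro h x b hb
    by_cases hcase : ∃ e ∈ P.sub, ∃ c, P.app e b = some c ∧ c ∈ φ x
    · obtain ⟨e, he, c, hec, hc⟩ := hcase
      obtain ⟨pa, hpa1, hpa2⟩ := P.pair_spec p₁ c
      have hpam : pa ∈ P.sub := P.sub_closed _ _ _ P.pair_mem hp₁ hpa1
      obtain ⟨f, hf, hff⟩ := comp pa e hpam he
      refine ⟨f, hf, P.pair p₁ c, ?_, Or.inl ⟨c, hc, rfl⟩⟩
      rw [hff, hec]; exact hpa2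
    · obtain ⟨e, he, c, hec, hc⟩ :=
        h x b ⟨hb, fun e' he' hex => hcase ⟨e', he', hex⟩⟩
      obtain ⟨pa, hpa1, hpa2⟩ := P.pair_spec p₂ c
      have hpam : pa ∈ P.sub := P.sub_closed _ _ _ P.pair_mem hp₂ hpa1
      obtain ⟨f, hf, hff⟩ := comp pa e hpam he
      refine ⟨f, hf, P.pair p₂ c, ?_, Or.inr ⟨c, hc, rfl⟩⟩
      rw [hff, hec]; exact hpa2
  · intro h x b hb
    obtain ⟨hbψ, hbφ⟩ := hb
    obtain ⟨e, he, w, hew, hw⟩ := h x b hbψ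
    obtain ⟨f, hf, hff⟩ := comp P.sndComb e P.snd_mem he
    rcases hw with ⟨a, ha, hwa⟩ | ⟨c, hc, hwc⟩
    · exact absurd ⟨a, by rw [hff, hew, hwa]; exact P.snd_spec p₁ a, ha⟩ (hbφ f hf)
    · exact ⟨f, hf, c, by rw [hff, hew, hwc]; exact P.snd_spec p₂ c, hc⟩
end

section
/- (Muchnik isomorphism.) Let A be a PCA with elementary sub-PCA A' and fixed pairing combinators, and let X be a set. For pairs (f, α) with f : Y → X a function from some set Y and α : Y → A, define (f,α) ≤_∀w (g,β) (where g : Z → X and β : Z → A) iff there exists a function h : Z → Y with f ∘ h = g such that for every z ∈ Z there exists ā ∈ A' with ā·β(z) defined and equal to α(h(z)). Define φ_{(f,α)} : X → 𝒫(A) by φ_{(f,α)}(x) := {α(y) : y ∈ Y, f(y) = x}. Then: (1) (f,α) ≤_∀w (g,β) if and only if φ_{(f,α)} ≤_w φ_{(g,β)}; and (2) for every φ : X → 𝒫(A) there exist a set Y, f : Y → X and α : Y → A with φ = φ_{(f,α)}. -/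
universe u v

/-- `φ_{(f,α)}(x) = {α(y) : y ∈ Y, f(y) = x}`. -/
def mucOf {α X Y : Type u} (f : Y → X) (a : Y → α) : X → Set α :=
  fun x => {w | ∃ y, f y = x ∧ a y = w}

/-- The order of the full universal completion of the Muchnik doctrine of
singletons: `(f,α) ≤_∀w (g,β)` iff there is `h : Z → Y` with `f ∘ h = g` such
that for every `z` there is `e ∈ A'` with `e·β(z)` defined and equal to `α(h z)`. -/
def forallCompMucLE {α X Y Z : Type u} (P : SubPCA α)
    (f : Y → X) (a : Y → α) (g : Z → X) (b : Z → α) : Prop :=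
  ∃ h : Z → Y, f ∘ h = g ∧ ∀ z : Z, ∃ e ∈ P.sub, P.app e (b z) = some (a (h z))

/-- Muchnik isomorphism: the map `(f,α) ↦ φ_{(f,α)}` preserves and reflects the
order and is surjective onto the Muchnik doctrine. -/
theorem muchnik_isomorphism {α X : Type u} (P : SubPCA α) :
    (∀ (Y Z : Type u) (f : Y → X) (a : Y → α) (g : Z → X) (b : Z → α),
      forallCompMucLE P f a g b ↔ MucLE P (mucOf f a) (mucOf g b)) ∧
    (∀ φ : X → Set α, ∃ (Y : Type u) (f : Y → X) (a : Y → α), φ = mucOf f a) := by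
  constructor
  · intro Y Z f a g b
    constructor
    · rintro ⟨h, hfg, hh⟩ x w ⟨z, hz, hw⟩
      obtain ⟨e, he, hae⟩ := hh z
      exact ⟨e, he, a (h z), by rw [hw] at hae; exact hae,
        h z, by rw [← hz, ← congrFun hfg z]; rfl, rfl⟩
    · intro H
      have key : ∀ z : Z, ∃ y : Y, f y = g z ∧ ∃ e ∈ P.sub, P.app e (b z) = some (a y) := by
        intro z
        obtain ⟨e, he, c, hc, y, hy, hay⟩ := H (g z) (b z) ⟨z, rfl, rfl⟩
        exact ⟨y, hy, e, he, by rw [hay]; exact hc⟩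
      choose h h1 h2 using key
      exact ⟨h, funext h1, h2⟩
  · intro φ
    refine ⟨Σ x : X, φ x, fun p => p.1, fun p => p.2, ?_⟩
    funext x
    ext w
    constructor
    · intro hw
      exact ⟨⟨x, w, hw⟩, rfl, rfl⟩
    · rintro ⟨⟨x', w', hw'⟩, rfl, rfl⟩
      exact hw'
end

section
/- Let A be a PCA with elementary sub-PCA A' and fixed pairing combinators, let X, Z ⊆ A, and let f : X → 𝒫*(A) and g : Z → 𝒫*(A). A realizer of g is a partial function G : A ⇀ A such that for every p ∈ Z, G(p) is defined and G(p) ∈ g(p). Then the following are equivalent: (i) there exist h̄, k̄ ∈ A' such that for every realizer G of g and every p ∈ X: k̄·p is defined, G(k̄·p) is defined, and h̄·⟨p, G(k̄·p)⟩ is defined and belongs to f(p); (ii) there exist k̄ ∈ A' with k̄·p defined and k̄·p ∈ Z for every p ∈ X, and h̄ ∈ A', such that for every p ∈ X and every q ∈ g(k̄·p), h̄·⟨p,q⟩ is defined and belongs to f(p). (Equivalence of the realizer-based and pointwise definitions of Weihrauch reducibility.) -/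
universe u v

/-- `G` is a realizer of `g : Z → 𝒫*(A)`: for every `p ∈ Z`, `G p` is defined
and `G p ∈ g p`. -/
def RealizerOf {α : Type u} (Z : Set α) (g : α → Set α) (G : α → Option α) : Prop :=
  ∀ p ∈ Z, ∃ v, G p = some v ∧ v ∈ g p

/-- Equivalence of the realizer-based and pointwise definitions of Weihrauch
reducibility for `f : X → 𝒫*(A)` and `g : Z → 𝒫*(A)`. -/
theorem weihrauch_realizer_characterization {α : Type u} (P : SubPCA α)
    (X Z : Set α) (f g : α → Set α)
    (hf : ∀ p ∈ X, (f p).Nonempty) (hg : ∀ p ∈ Z, (g p).Nonempty) :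
    (∃ hb ∈ P.sub, ∃ kb ∈ P.sub, ∀ G : α → Option α, RealizerOf Z g G →
      ∀ p ∈ X, ∃ kp v r, P.app kb p = some kp ∧ G kp = some v ∧
        P.app hb (P.pair p v) = some r ∧ r ∈ f p) ↔
    (∃ kb ∈ P.sub, (∀ p ∈ X, ∃ kp, P.app kb p = some kp ∧ kp ∈ Z) ∧
      ∃ hb ∈ P.sub, ∀ p ∈ X, ∀ kp, P.app kb p = some kp → ∀ q ∈ g kp,
        ∃ r, P.app hb (P.pair p q) = some r ∧ r ∈ f p) := by

  classical
  constructor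
  · rintro ⟨hb, hbmem, kb, kbmem, H⟩
    -- canonical realizer via choice
    set G0 : α → Option α := fun p => if h : p ∈ Z then some (hg p h).choose else none
      with hG0
    have hG0real : RealizerOf Z g G0 := by
      intro p hp
      exact ⟨(hg p hp).choose, by simp [hG0, hp], (hg p hp).choose_spec⟩
    refine ⟨kb, kbmem, ?_, hb, hbmem, ?_⟩
    · intro p hp
      obtain ⟨kp, v, r, hkp, hGv, _, _⟩ := H G0 hG0real p hp
      refine ⟨kp, hkp, ?_⟩
      by_contra hkZ
      simp [hG0, hkZ] at hGv
    · intro p hp kp hkp q hq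
      have hkZ : kp ∈ Z := by
        obtain ⟨kp', v, r, hkp', hGv, _, _⟩ := H G0 hG0real p hp
        have : kp' = kp := by
          have := hkp'.symm.trans hkp; exact Option.some.inj this
        subst this
        by_contra hkZ
        simp [hG0, hkZ] at hGv
      set G1 : α → Option α := fun x => if x = kp then some q else G0 x with hG1
      have hG1real : RealizerOf Z g G1 := by
        intro x hx
        by_cases hxk : x = kp
        · subst hxk; exact ⟨q, by simp [hG1], hq⟩
        · obtain ⟨v, hv, hvg⟩ := hG0real x hx
          exact ⟨v, by simp [hG1, hxk, hv], hvg⟩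
      obtain ⟨kp', v, r, hkp', hGv, hr, hrf⟩ := H G1 hG1real p hp
      have hkk : kp' = kp := Option.some.inj (hkp'.symm.trans hkp)
      subst hkk
      have hv : v = q := by
        simp [hG1] at hGv; exact hGv.symm
      subst hv
      exact ⟨r, hr, hrf⟩
  · rintro ⟨kb, kbmem, hkZ, hb, hbmem, H⟩
    refine ⟨hb, hbmem, kb, kbmem, ?_⟩
    intro G hG p hp
    obtain ⟨kp, hkp, hkpZ⟩ := hkZ p hp
    obtain ⟨v, hv, hvg⟩ := hG kp hkpZ
    obtain ⟨r, hr, hrf⟩ := H p hp kp hkp v hvg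
    exact ⟨kp, v, r, hkp, hv, hr, hrf⟩
end

section
/- Let A be a PCA with elementary sub-PCA A' and fixed pairing combinators, let X, Z ⊆ A, and let f : X → 𝒫*(A) and g : Z → 𝒫*(A). A realizer of g is a partial function G : A ⇀ A such that for every p ∈ Z, G(p) is defined and G(p) ∈ g(p). Then the following are equivalent: (i) there exist h̄, k̄ ∈ A' such that for every realizer G of g and every p ∈ X: k̄·p is defined, G(k̄·p) is defined, and h̄·G(k̄·p) is defined and belongs to f(p); (ii) there exist k̄ ∈ A' with k̄·p defined and k̄·p ∈ Z for every p ∈ X, and h̄ ∈ A', such that for every p ∈ X and every q ∈ g(k̄·p), h̄·q is defined and belongs to f(p). (Equivalence of the realizer-based and pointwise definitions of strong Weihrauch reducibility.) -/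
universe u v

/-- Equivalence of the realizer-based and pointwise definitions of strong
Weihrauch reducibility for `f : X → 𝒫*(A)` and `g : Z → 𝒫*(A)`. -/
theorem strong_weihrauch_realizer_characterization {α : Type u} (P : SubPCA α)
    (X Z : Set α) (f g : α → Set α)
    (hf : ∀ p ∈ X, (f p).Nonempty) (hg : ∀ p ∈ Z, (g p).Nonempty) :
    (∃ hb ∈ P.sub, ∃ kb ∈ P.sub, ∀ G : α → Option α, RealizerOf Z g G →
      ∀ p ∈ X, ∃ kp v r, P.app kb p = some kp ∧ G kp = some v ∧
        P.app hb v = some r ∧ r ∈ f p) ↔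
    (∃ kb ∈ P.sub, (∀ p ∈ X, ∃ kp, P.app kb p = some kp ∧ kp ∈ Z) ∧
      ∃ hb ∈ P.sub, ∀ p ∈ X, ∀ kp, P.app kb p = some kp → ∀ q ∈ g kp,
        ∃ r, P.app hb q = some r ∧ r ∈ f p) := by
  classical
  constructor
  · rintro ⟨hb, hbmem, kb, kbmem, H⟩
    -- canonical realizer, defined exactly on Z
    set G₀ : α → Option α := fun z => if h : z ∈ Z then some (hg z h).choose else none with hG₀
    have hG₀real : RealizerOf Z g G₀ := by
      intro p hp
      exact ⟨(hg p hp).choose, by simp [hG₀, hp], (hg p hp).choose_spec⟩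
    refine ⟨kb, kbmem, ?_, hb, hbmem, ?_⟩
    · intro p hp
      obtain ⟨kp, v, r, hkp, hv, -, -⟩ := H G₀ hG₀real p hp
      refine ⟨kp, hkp, ?_⟩
      by_contra hnz
      simp [hG₀, hnz] at hv
    · intro p hp kp hkp q hq
      -- realizer forced to output q at kp
      set Gq : α → Option α := fun z => if z = kp then some q else G₀ z with hGq
      have hGqreal : RealizerOf Z g Gq := by
        intro z hz
        by_cases hzk : z = kp
        · exact ⟨q, by simp [hGq, hzk], hzk ▸ hq⟩
        · exact ⟨(hg z hz).choose, by simp [hGq, hzk, hG₀, hz], (hg z hz).choose_spec⟩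
      obtain ⟨kp', v, r, hkp', hv, hr, hrf⟩ := H Gq hGqreal p hp
      have : kp' = kp := by rw [hkp] at hkp'; exact (Option.some.injEq _ _ ▸ hkp').symm
      subst this
      have hvq : v = q := (by simpa [hGq] using hv : q = v).symm
      subst hvq
      exact ⟨r, hr, hrf⟩
  · rintro ⟨kb, kbmem, hkZ, hb, hbmem, H⟩
    refine ⟨hb, hbmem, kb, kbmem, ?_⟩
    intro G hG p hp
    obtain ⟨kp, hkp, hkpZ⟩ := hkZ p hp
    obtain ⟨v, hv, hvg⟩ := hG kp hkpZ
    obtain ⟨r, hr, hrf⟩ := H p hp kp hkp v hvg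
    exact ⟨kp, v, r, hkp, hv, hr, hrf⟩
end

section
/- Let A be a PCA with elementary sub-PCA A' and fixed pairing combinators, and let X, Z be assemblies over A. Let f assign to each quadruple ((p,x),(s,z)) with p ⊩_X x and s ⊩_Z z a nonempty subset f((p,x),(s,z)) ⊆ A, and let g assign to each pair (s,z) with s ⊩_Z z a nonempty subset g(s,z) ⊆ A. Define ∀_{π_Z}(f)(s,z) := ⋃_{x ∈ |X|} {⟨p,q⟩ : p ⊩_X x and q ∈ f((p,x),(s,z))}. Then the following are equivalent: (i) there exists ā ∈ A' such that for every s ⊩_Z z and every w ∈ ∀_{π_Z}(f)(s,z), ā·⟨s,w⟩ is defined and belongs to g(s,z); (ii) there exists b̄ ∈ A' such that for all p ⊩_X x and s ⊩_Z z and every q ∈ f((p,x),(s,z)), b̄·⟨⟨p,s⟩,q⟩ is defined and belongs to g(s,z). (The elementary realizer-based Weihrauch doctrine has right adjoints along product projections.) -/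
universe u v

/-- An assembly over `α`: a set together with a total naming relation. -/
structure Assembly (α : Type u) where
  carrier : Type u
  rel : α → carrier → Prop
  total : ∀ x : carrier, ∃ p, rel p x

/-- The support of an assembly: the set of names. -/
def Assembly.supp {α : Type u} (X : Assembly α) : Set α := {p | ∃ x, X.rel p x}

/-- A morphism of `extAsm(A,A')`: a pair `(a, φ)` where `a` is a function on
supports realized by an element of `A'`, and `φ` maps each pair `(p,x)` with
`p ⊩_X x` to an element of `|Y|` named by `a p`. -/
structure ExtHom {α : Type u} (P : SubPCA α) (X Y : Assembly α) where
  a : X.supp → Y.supp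
  map : ∀ (p : α) (x : X.carrier), X.rel p x → Y.carrier
  realized : ∃ e ∈ P.sub, ∀ p : X.supp, P.app e p.1 = some (a p).1
  tracks : ∀ (p : α) (x : X.carrier) (h : X.rel p x),
    Y.rel (a ⟨p, ⟨x, h⟩⟩).1 (map p x h)


inductive Tm (α : Type u) where
  | const : α → Tm α
  | var : Tm α
  | app : Tm α → Tm α → Tm α

def Tm.eval {α : Type u} (P : SubPCA α) : Tm α → α → Option α
  | .const c, _ => some c
  | .var, x => some x
  | .app t u, x => (t.eval P x).bind fun a => (u.eval P x).bind fun b => P.app a b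

def Tm.good {α : Type u} (P : SubPCA α) : Tm α → Prop
  | .const c => c ∈ P.sub
  | .var => True
  | .app t u => t.good P ∧ u.good P

theorem Tm.comp {α : Type u} (P : SubPCA α) (t : Tm α) (h : t.good P) :
    ∃ L ∈ P.sub, ∀ x, P.app L x = t.eval P x := by
  induction t with
  | const c =>
    obtain ⟨kc, h1, _⟩ := P.k_spec c c
    refine ⟨kc, P.sub_closed _ _ _ P.k_mem h h1, fun x => ?_⟩
    obtain ⟨kc', h1', h2'⟩ := P.k_spec c x
    rw [h1] at h1'
    cases h1'
    exact h2'
  | var =>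
    obtain ⟨sk, skk, h1, h2⟩ := P.s_spec₁ P.kComb P.kComb
    have hsk : sk ∈ P.sub := P.sub_closed _ _ _ P.s_mem P.k_mem h1
    refine ⟨skk, P.sub_closed _ _ _ hsk P.k_mem h2, fun x => ?_⟩
    obtain ⟨kx, hk1, _⟩ := P.k_spec x x
    obtain ⟨kx', hk1', hk2'⟩ := P.k_spec x kx
    rw [hk1] at hk1'
    cases hk1'
    rw [P.s_spec₂ _ _ _ _ _ h1 h2, hk1]
    simpa [Tm.eval] using hk2'
  | app t u iht ihu =>
    obtain ⟨L1, hL1, e1⟩ := iht h.1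
    obtain ⟨L2, hL2, e2⟩ := ihu h.2
    obtain ⟨sa, sab, h1, h2⟩ := P.s_spec₁ L1 L2
    have hsa : sa ∈ P.sub := P.sub_closed _ _ _ P.s_mem hL1 h1
    refine ⟨sab, P.sub_closed _ _ _ hsa hL2 h2, fun x => ?_⟩
    rw [P.s_spec₂ _ _ _ _ _ h1 h2, e1, e2]
    rfl

theorem SubPCA.pair_eval {α : Type u} (P : SubPCA α) (a b : α) :
    (P.app P.pairComb a).bind (fun pa => P.app pa b) = some (P.pair a b) := by
  obtain ⟨pa, h1, h2⟩ := P.pair_spec a b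
  rw [h1]
  exact h2

/-- `∀_{π_Z}(f)(s,z) = ⋃_{x ∈ |X|} {⟨p,q⟩ : p ⊩_X x and q ∈ f((p,x),(s,z))}`. -/
def rwForallProj {α : Type u} (P : SubPCA α) (X Z : Assembly α)
    (f : α → X.carrier → α → Z.carrier → Set α) : α → Z.carrier → Set α :=
  fun s z => {w | ∃ (x : X.carrier) (p : α), X.rel p x ∧ ∃ q ∈ f p x s z, w = P.pair p q}

/-- The elementary realizer-based Weihrauch doctrine has right adjoints along
product projections: `g ≤_drW ∀_{π_Z}(f) ↔ g ∘ π_Z ≤_drW f`. -/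
theorem elementary_rw_forall {α : Type u} (P : SubPCA α) (X Z : Assembly α)
    (f : α → X.carrier → α → Z.carrier → Set α) (g : α → Z.carrier → Set α)
    (hf : ∀ (p : α) (x : X.carrier) (s : α) (z : Z.carrier),
      X.rel p x → Z.rel s z → (f p x s z).Nonempty)
    (hg : ∀ (s : α) (z : Z.carrier), Z.rel s z → (g s z).Nonempty) :
    (∃ ab ∈ P.sub, ∀ (s : α) (z : Z.carrier), Z.rel s z →
      ∀ w ∈ rwForallProj P X Z f s z,
        ∃ r, P.app ab (P.pair s w) = some r ∧ r ∈ g s z) ↔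
    (∃ bb ∈ P.sub, ∀ (p : α) (x : X.carrier), X.rel p x →
      ∀ (s : α) (z : Z.carrier), Z.rel s z → ∀ q ∈ f p x s z,
        ∃ r, P.app bb (P.pair (P.pair p s) q) = some r ∧ r ∈ g s z) := by

  constructor
  · rintro ⟨ab, hab, hspec⟩
    -- term: λ v. ab ⬝ ⟨snd (fst v), ⟨fst (fst v), snd v⟩⟩
    set t : Tm α := .app (.const ab)
      (.app (.app (.const P.pairComb) (.app (.const P.sndComb) (.app (.const P.fstComb) .var)))
        (.app (.app (.const P.pairComb) (.app (.const P.fstComb) (.app (.const P.fstComb) .var)))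
          (.app (.const P.sndComb) .var))) with ht
    have hgood : t.good P := by
      simp [ht, Tm.good, hab, P.pair_mem, P.fst_mem, P.snd_mem]
    obtain ⟨bb, hbb, hev⟩ := Tm.comp P t hgood
    refine ⟨bb, hbb, fun p x hpx s z hsz q hq => ?_⟩
    obtain ⟨r, hr1, hr2⟩ := hspec s z hsz (P.pair p q) ⟨x, p, hpx, q, hq, rfl⟩
    refine ⟨r, ?_, hr2⟩
    rw [hev, ht]
    simp [Tm.eval, P.fst_spec, P.snd_spec, P.pair_eval]
    exact hr1
  · rintro ⟨bb, hbb, hspec⟩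
    -- term: λ v. bb ⬝ ⟨⟨fst (snd v), fst v⟩, snd (snd v)⟩
    set t : Tm α := .app (.const bb)
      (.app (.app (.const P.pairComb)
          (.app (.app (.const P.pairComb) (.app (.const P.fstComb) (.app (.const P.sndComb) .var)))
            (.app (.const P.fstComb) .var)))
        (.app (.const P.sndComb) (.app (.const P.sndComb) .var))) with ht
    have hgood : t.good P := by
      simp [ht, Tm.good, hbb, P.pair_mem, P.fst_mem, P.snd_mem]
    obtain ⟨ab, hab, hev⟩ := Tm.comp P t hgood
    refine ⟨ab, hab, fun s z hsz w hw => ?_⟩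
    obtain ⟨x, p, hpx, q, hq, rfl⟩ := hw
    obtain ⟨r, hr1, hr2⟩ := hspec p x hpx s z hsz q hq
    refine ⟨r, ?_, hr2⟩
    rw [hev, ht]
    simp [Tm.eval, P.fst_spec, P.snd_spec, P.pair_eval]
    exact hr1
end

section
/- Let A be a PCA with elementary sub-PCA A' and fixed pairing combinators, and let f, g : A → 𝒫(𝒫(A)) be extended Weihrauch predicates with dom(f) := {p : f(p) ≠ ∅} and dom(g) := {p : g(p) ≠ ∅}. Say f ≤_extW g iff there exist k̄, h̄ ∈ A' such that: (i) for every p ∈ dom(f), k̄·p is defined and g(k̄·p) ≠ ∅; and (ii) for every p ∈ dom(f) and every A ∈ f(p) there exists B ∈ g(k̄·p) such that for every q ∈ B, h̄·⟨p,q⟩ is defined and belongs to A. Define the assembly X_f by |X_f| := ⋃_{p ∈ dom(f)} f(p) ⊆ 𝒫(A) and p ⊩_{X_f} A iff A ∈ f(p), and similarly X_g. Then f ≤_extW g if and only if there exist a morphism (k̄, φ) : X_f → X_g in extAsm(A,A') and h̄ ∈ A' such that for every p ⊩_{X_f} A and every q ∈ φ(p,A), h̄·⟨p,q⟩ is defined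 and belongs to A. -/
universe u v

/-- The assembly `X_f` associated to an extended Weihrauch predicate
`f : A → 𝒫(𝒫(A))`: its underlying set is `⋃_{p ∈ dom f} f(p) ⊆ 𝒫(A)` and
`p ⊩ A` iff `A ∈ f p`. -/
def extWAsm {α : Type u} (f : α → Set (Set α)) : Assembly α where
  carrier := {A : Set α // ∃ p, A ∈ f p}
  rel := fun p A => A.1 ∈ f p
  total := fun A => A.2

/-- Extended Weihrauch reducibility `f ≤_extW g` (Bauer). -/
def extWLE {α : Type u} (P : SubPCA α) (f g : α → Set (Set α)) : Prop :=
  ∃ kb ∈ P.sub, ∃ hb ∈ P.sub,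
    (∀ p : α, (f p).Nonempty → ∃ v, P.app kb p = some v ∧ (g v).Nonempty) ∧
    (∀ p : α, ∀ A ∈ f p, ∀ v, P.app kb p = some v →
      ∃ B ∈ g v, ∀ q ∈ B, ∃ r, P.app hb (P.pair p q) = some r ∧ r ∈ A)

/-- `f ≤_extW g` iff there are a morphism `(k̄,φ) : X_f → X_g` in
`extAsm(A,A')` and `h̄ ∈ A'` such that for every `p ⊩_{X_f} A` and every
`q ∈ φ(p,A)`, `h̄·⟨p,q⟩` is defined and belongs to `A`. -/
theorem extW_characterization {α : Type u} (P : SubPCA α)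
    (f g : α → Set (Set α)) :
    extWLE P f g ↔
      ∃ m : ExtHom P (extWAsm f) (extWAsm g), ∃ hb ∈ P.sub,
        ∀ (p : α) (A : (extWAsm f).carrier) (h : (extWAsm f).rel p A),
          ∀ q ∈ (m.map p A h).1,
            ∃ r, P.app hb (P.pair p q) = some r ∧ r ∈ A.1 := by
  constructor
  · rintro ⟨kb, hkb, hb, hhb, h1, h2⟩
    have hv : ∀ p : (extWAsm f).supp, ∃ v, P.app kb p.1 = some v ∧ (g v).Nonempty := by
      rintro ⟨p, A, hA⟩
      exact h1 p ⟨A.1, hA⟩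
    choose v hv1 hv2 using hv
    have hmap : ∀ (p : α) (A : (extWAsm f).carrier) (h : (extWAsm f).rel p A),
        ∃ B ∈ g (v ⟨p, A, h⟩), ∀ q ∈ B, ∃ r, P.app hb (P.pair p q) = some r ∧ r ∈ A.1 :=
      fun p A h => h2 p A.1 h _ (hv1 ⟨p, A, h⟩)
    choose B hB1 hB2 using hmap
    refine ⟨⟨fun p => ⟨v p, ⟨⟨(hv2 p).choose, v p, (hv2 p).choose_spec⟩, (hv2 p).choose_spec⟩⟩,
      fun p A h => ⟨B p A h, ⟨v ⟨p, A, h⟩, hB1 p A h⟩⟩,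
      ⟨kb, hkb, fun p => hv1 p⟩,
      fun p A h => hB1 p A h⟩, hb, hhb, fun p A h => hB2 p A h⟩
  · rintro ⟨m, hb, hhb, H⟩
    obtain ⟨e, he, hre⟩ := m.realized
    refine ⟨e, he, hb, hhb, ?_, ?_⟩
    · rintro p ⟨A, hA⟩
      refine ⟨(m.a ⟨p, ⟨A, p, hA⟩, hA⟩).1, hre ⟨p, ⟨A, p, hA⟩, hA⟩, ?_⟩
      obtain ⟨x, hx⟩ := (m.a ⟨p, ⟨A, p, hA⟩, hA⟩).2
      exact ⟨x.1, hx⟩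
    · intro p A hA v hv
      have hv' := hre ⟨p, ⟨⟨A, p, hA⟩, hA⟩⟩
      have hveq : v = (m.a ⟨p, ⟨⟨A, p, hA⟩, hA⟩⟩).1 := by
        rw [hv] at hv'; exact Option.some.inj hv'
      refine ⟨(m.map p ⟨A, p, hA⟩ hA).1, ?_, fun q hq => H p ⟨A, p, hA⟩ hA q hq⟩
      rw [hveq]
      exact m.tracks p ⟨A, p, hA⟩ hA
end

section
/- (The doctrine 𝔇 is the full existential completion of the Medvedev doctrine.) Let A be a PCA with elementary sub-PCA A' and fixed pairing combinators, and let X be a set. Consider (a) pairs (f, α) with f : Y → X a function from some set Y and α : Y → 𝒫(A), ordered by: (f,α) ≤_∃f (g,β) (with g : Z → X, β : Z → 𝒫(A)) iff there exist a function k : Y → Z with g ∘ k = f and ā ∈ A' such that for every y ∈ Y and every b ∈ β(k(y)), ā·b is defined and ā·b ∈ α(y); and (b) pairs (R, F) with R ⊆ X × 𝒫(A) and F : R → 𝒫(A), ordered by: (R,F) ≤_D (S,G) iff there exist a function φ : R → 𝒫(A) and h̄ ∈ A' such that for every (x,A) ∈ R, (x, φ(x,A)) ∈ S and for every q ∈ G(x,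 φ(x,A)), h̄·q is defined and h̄·q ∈ F(x,A). Define the map (f,α) ↦ (R_{(f,α)}, F_{(f,α)}) where R_{(f,α)} := {(x,A) : ∃y ∈ Y, f(y) = x and A = α(y)} and F_{(f,α)}(x,A) := A. Then: (1) (f,α) ≤_∃f (g,β) if and only if (R_{(f,α)}, F_{(f,α)}) ≤_D (R_{(g,β)}, F_{(g,β)}); and (2) for every (R,F), taking π : R → X the first projection and F itself as a map R → 𝒫(A), one has both (R,F) ≤_D (R_{(π,F)}, F_{(π,F)}) and (R_{(π,F)}, F_{(π,F)}) ≤_D (R,F). -/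
universe u v

/-- The order of the doctrine `𝔇`: `(R,F) ≤_D (S,G)` iff there are
`φ : R → 𝒫(A)` and `h̄ ∈ A'` such that for every `(x,A) ∈ R`,
`(x, φ(x,A)) ∈ S` and for every `q ∈ G(x, φ(x,A))`, `h̄·q` is defined and
belongs to `F(x,A)`. -/
def DLE {α X : Type u} (P : SubPCA α) (R S : Set (X × Set α))
    (F : R → Set α) (G : S → Set α) : Prop :=
  ∃ φm : R → Set α, ∃ hb ∈ P.sub, ∀ r : R,
    ∃ hS : (r.1.1, φm r) ∈ S, ∀ q ∈ G ⟨(r.1.1, φm r), hS⟩,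
      ∃ c, P.app hb q = some c ∧ c ∈ F r

/-- The order of the full existential completion of the Medvedev doctrine:
`(f,α) ≤_∃f (g,β)` iff there are `k : Y → Z` with `g ∘ k = f` and `ā ∈ A'`
such that for every `y` and every `b ∈ β(k y)`, `ā·b` is defined and in `α(y)`. -/
def ExCompLE {α X Y Z : Type u} (P : SubPCA α)
    (f : Y → X) (al : Y → Set α) (g : Z → X) (be : Z → Set α) : Prop :=
  ∃ k : Y → Z, g ∘ k = f ∧ ∃ ab ∈ P.sub, ∀ y : Y, ∀ b ∈ be (k y),
    ∃ c, P.app ab b = some c ∧ c ∈ al y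

/-- `R_{(f,α)} = {(x,A) : ∃ y, f y = x ∧ α y = A}`. -/
def Rof {α X Y : Type u} (f : Y → X) (al : Y → Set α) : Set (X × Set α) :=
  {r | ∃ y, f y = r.1 ∧ al y = r.2}

/-- `F_{(f,α)}(x,A) = A`. -/
def Fof {α X Y : Type u} (f : Y → X) (al : Y → Set α) : Rof f al → Set α :=
  fun r => r.1.2

lemma SubPCA.idComb {α : Type u} (P : SubPCA α) :
    ∃ i ∈ P.sub, ∀ q : α, P.app i q = some q := by
  obtain ⟨sa, sab, h1, h2⟩ := P.s_spec₁ P.kComb P.kComb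
  refine ⟨sab, P.sub_closed _ _ _ (P.sub_closed _ _ _ P.s_mem P.k_mem h1) P.k_mem h2, ?_⟩
  intro q
  have h3 := P.s_spec₂ P.kComb P.kComb q sa sab h1 h2
  obtain ⟨kq, hk1, _⟩ := P.k_spec q q
  obtain ⟨ka, ha1, ha2⟩ := P.k_spec q kq
  rw [hk1] at ha1
  cases ha1
  rw [h3, hk1]
  simpa using ha2

/-- The doctrine `𝔇` is the full existential completion of the Medvedev
doctrine: the map `(f,α) ↦ (R_{(f,α)}, F_{(f,α)})` preserves and reflects the
orders, and every `(R,F)` is equivalent to one in its image. -/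
theorem D_is_full_existential_completion {α X : Type u} (P : SubPCA α) :
    (∀ (Y Z : Type u) (f : Y → X) (al : Y → Set α) (g : Z → X) (be : Z → Set α),
      ExCompLE P f al g be ↔ DLE P (Rof f al) (Rof g be) (Fof f al) (Fof g be)) ∧
    (∀ (R : Set (X × Set α)) (F : R → Set α),
      DLE P R (Rof (fun r : R => r.1.1) F) F (Fof (fun r : R => r.1.1) F) ∧
      DLE P (Rof (fun r : R => r.1.1) F) R (Fof (fun r : R => r.1.1) F) F) := by
  obtain ⟨i, hi, hid⟩ := P.idComb
  constructor
  · intro Y Z f al g be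
    constructor
    · rintro ⟨k, hgk, ab, hab, hk⟩
      -- choose a witness y for each r ∈ Rof f al
      choose w hw1 hw2 using fun r : Rof f al => r.2
      refine ⟨fun r => be (k (w r)), ab, hab, fun r => ?_⟩
      refine ⟨⟨k (w r), ?_, rfl⟩, ?_⟩
      · show g (k (w r)) = r.1.1
        rw [show g (k (w r)) = f (w r) from congrFun hgk (w r), hw1]
      · intro q hq
        obtain ⟨c, hc1, hc2⟩ := hk (w r) q hq
        refine ⟨c, hc1, ?_⟩
        show c ∈ r.1.2
        rw [← hw2 r]; exact hc2
    · rintro ⟨φm, hb, hhb, hφ⟩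
      have hmem : ∀ y : Y, ((f y, al y) : X × Set α) ∈ Rof f al := fun y => ⟨y, rfl, rfl⟩
      set ry : Y → Rof f al := fun y => ⟨(f y, al y), hmem y⟩ with hry
      have hS : ∀ y : Y, ∃ z, g z = f y ∧ be z = φm (ry y) := fun y => (hφ (ry y)).1
      choose kk hk1 hk2 using hS
      refine ⟨kk, funext hk1, hb, hhb, fun y b hb' => ?_⟩
      obtain ⟨hSy, hq⟩ := hφ (ry y)
      have : b ∈ Fof g be ⟨((ry y).1.1, φm (ry y)), hSy⟩ := by
        show b ∈ φm (ry y)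
        rw [← hk2 y]; exact hb'
      exact hq b this
  · intro R F
    constructor
    · -- (R,F) ≤ (Rof π F, Fof)
      refine ⟨fun r => F r, i, hi, fun r => ?_⟩
      refine ⟨⟨r, rfl, rfl⟩, fun q hq => ⟨q, hid q, hq⟩⟩
    · -- (Rof π F, Fof) ≤ (R,F)
      choose w hw1 hw2 using fun r : Rof (fun r : R => r.1.1) F => r.2
      refine ⟨fun r => (w r).1.2, i, hi, fun r => ?_⟩
      have hmem : ((r.1.1, (w r).1.2) : X × Set α) ∈ R := by
        rw [← hw1 r]
        exact (w r).2
      refine ⟨hmem, fun q hq => ⟨q, hid q, ?_⟩⟩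
      -- F ⟨(r.1.1, (w r).1.2), hmem⟩ = F (w r), and F (w r) = Fof ... r = r.1.2
      have hFe : F ⟨(r.1.1, (w r).1.2), hmem⟩ = F (w r) := by
        have h : ((r.1.1, (w r).1.2) : X × Set α) = (w r).1 := by
          have := hw1 r
          exact Prod.ext (this.symm) rfl
        exact congrArg F (Subtype.ext h)
      rw [hFe] at hq
      show q ∈ r.1.2
      rw [← hw2 r]; exact hq
end
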